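/- arXiv:math/0509552 — 6 statements merged into one kernel-verified Lean document; each statement's English description precedes it below -/
import Mathlib

section
/- Let n ≥ 2, let x₁, x₂ be unit vectors in ℝⁿ and let θ₁ < θ₂ be real numbers. Then there exists a map φ : [θ₁,θ₂] → S^{n-1} with φ(θ₁) = x₁, φ(θ₂) = x₂ and arccos⟨φ(s),φ(t)⟩ < |s−t| for all s ≠ t in [θ₁,θ₂] (a timelike curve in the cyclic cover of the Einstein universe joining (x₁,θ₁) to (x₂,θ₂)) if and only if arccos⟨x₁,x₂⟩ < θ₂ − θ₁. -/
open scoped RealInnerProductSpace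

private lemma aux_inner {E : Type*} [NormedAddCommGroup E] [InnerProductSpace ℝ E]
    (x v : E) (hx : ⟪x, x⟫ = 1) (hv : ⟪v, v⟫ = 1) (ho : ⟪x, v⟫ = 0) (a b : ℝ) :
    ⟪Real.cos a • x + Real.sin a • v, Real.cos b • x + Real.sin b • v⟫ =
      Real.cos (a - b) := by
  have ho' : ⟪v, x⟫ = 0 := by rw [real_inner_comm]; exact ho
  simp only [inner_add_left, inner_add_right, real_inner_smul_left, real_inner_smul_right,
    hx, hv, ho, ho', Real.cos_sub]
  ring

private lemma aux_norm {E : Type*} [NormedAddCommGroup E] [InnerProductSpace ℝ E]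
    (x v : E) (hx : ⟪x, x⟫ = 1) (hv : ⟪v, v⟫ = 1) (ho : ⟪x, v⟫ = 0) (a : ℝ) :
    ‖Real.cos a • x + Real.sin a • v‖ = 1 := by
  have h := aux_inner x v hx hv ho a a
  rw [sub_self, Real.cos_zero, real_inner_self_eq_norm_sq] at h
  nlinarith [norm_nonneg (Real.cos a • x + Real.sin a • v)]

/-- A timelike curve in the cyclic cover `S^{n-1} × ℝ` of the Einstein
universe joining `(x₁, θ₁)` to `(x₂, θ₂)` (with `θ₁ < θ₂`) exists if and only if
the spherical distance `arccos ⟪x₁, x₂⟫` is strictly less than `θ₂ - θ₁`. -/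
theorem timelike_curve_exists_iff (n : ℕ) (hn : 2 ≤ n)
    (x₁ x₂ : EuclideanSpace ℝ (Fin n)) (hx₁ : ‖x₁‖ = 1) (hx₂ : ‖x₂‖ = 1)
    (θ₁ θ₂ : ℝ) (hθ : θ₁ < θ₂) :
    (∃ φ : ℝ → EuclideanSpace ℝ (Fin n),
        (∀ t ∈ Set.Icc θ₁ θ₂, ‖φ t‖ = 1) ∧ φ θ₁ = x₁ ∧ φ θ₂ = x₂ ∧
        ∀ s ∈ Set.Icc θ₁ θ₂, ∀ t ∈ Set.Icc θ₁ θ₂, s ≠ t →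
          Real.arccos ⟪φ s, φ t⟫ < |s - t|) ↔
      Real.arccos ⟪x₁, x₂⟫ < θ₂ - θ₁ := by
  constructor
  · rintro ⟨φ, -, h1, h2, h⟩
    have := h θ₁ (Set.left_mem_Icc.2 hθ.le) θ₂ (Set.right_mem_Icc.2 hθ.le) hθ.ne
    rwa [h1, h2, abs_of_nonpos (by linarith), neg_sub] at this
  · intro hd
    generalize hdef : Real.arccos ⟪x₁, x₂⟫ = d at hd
    have hI : |⟪x₁, x₂⟫| ≤ 1 := by
      have := abs_real_inner_le_norm x₁ x₂
      rwa [hx₁, hx₂, one_mul] at this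
    have hI1 : -1 ≤ ⟪x₁, x₂⟫ := (abs_le.1 hI).1
    have hI2 : ⟪x₁, x₂⟫ ≤ 1 := (abs_le.1 hI).2
    have hcos : Real.cos d = ⟪x₁, x₂⟫ := by rw [← hdef]; exact Real.cos_arccos hI1 hI2
    have hcos' : Real.cos d = ⟪x₂, x₁⟫ := by rw [hcos, real_inner_comm]
    have hd0 : 0 ≤ d := hdef ▸ Real.arccos_nonneg _
    have hdpi : d ≤ Real.pi := hdef ▸ Real.arccos_le_pi _
    have hx₁x₁ : ⟪x₁, x₁⟫ = 1 := by
      rw [real_inner_self_eq_norm_sq, hx₁]; norm_num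
    have hcs := Real.sin_sq_add_cos_sq d
    -- obtain a unit vector v orthogonal to x₁ with x₂ = cos d • x₁ + sin d • v
    obtain ⟨v, hvv, hvo, hvx⟩ : ∃ v : EuclideanSpace ℝ (Fin n), ⟪v, v⟫ = 1 ∧ ⟪x₁, v⟫ = 0 ∧
        x₂ = Real.cos d • x₁ + Real.sin d • v := by
      by_cases hs : Real.sin d = 0
      · -- d = 0 or d = π, so x₂ = ± x₁
        have hsq : Real.cos d ^ 2 = 1 := by nlinarith
        have hx2eq : x₂ = Real.cos d • x₁ := by
          have hnorm : ‖x₂ - Real.cos d • x₁‖ ^ 2 = 0 := by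
            rw [norm_sub_sq_real, real_inner_smul_right, norm_smul, ← hcos']
            simp only [hx₁, hx₂, Real.norm_eq_abs, mul_one]
            nlinarith [sq_abs (Real.cos d)]
          have := pow_eq_zero_iff (n := 2) (by norm_num) |>.1 hnorm
          rw [norm_eq_zero, sub_eq_zero] at this
          exact this
        -- find a unit vector orthogonal to x₁
        have hx₁ne : x₁ ≠ 0 := by intro h; rw [h, norm_zero] at hx₁; norm_num at hx₁
        have hne : (ℝ ∙ x₁)ᗮ ≠ ⊥ := by
          intro hbot
          rw [Submodule.orthogonal_eq_bot_iff] at hbot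
          have h1 : Module.finrank ℝ (ℝ ∙ x₁) = 1 := finrank_span_singleton hx₁ne
          have h2 : Module.finrank ℝ (EuclideanSpace ℝ (Fin n)) = n := by simp
          rw [hbot] at h1
          have h3 : Module.finrank ℝ (EuclideanSpace ℝ (Fin n)) = 1 := by
            rw [← h1]; exact (Submodule.topEquiv.finrank_eq).symm
          omega
        obtain ⟨w, hw, hwne⟩ := Submodule.exists_mem_ne_zero_of_ne_bot hne
        refine ⟨‖w‖⁻¹ • w, ?_, ?_, ?_⟩
        · rw [real_inner_smul_left, real_inner_smul_right, real_inner_self_eq_norm_sq]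
          have : ‖w‖ ≠ 0 := norm_ne_zero_iff.2 hwne
          field_simp
        · rw [real_inner_smul_right,
            Submodule.mem_orthogonal_singleton_iff_inner_right.1 hw, mul_zero]
        · rw [hs, zero_smul, add_zero, hx2eq]
      · refine ⟨(Real.sin d)⁻¹ • (x₂ - Real.cos d • x₁), ?_, ?_, ?_⟩
        · have hx₂x₂ : ⟪x₂, x₂⟫ = 1 := by
            rw [real_inner_self_eq_norm_sq, hx₂]; norm_num
          have hnorm : ⟪x₂ - Real.cos d • x₁, x₂ - Real.cos d • x₁⟫ = Real.sin d ^ 2 := by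
            simp only [inner_sub_left, inner_sub_right, real_inner_smul_left,
              real_inner_smul_right, hx₁x₁, hx₂x₂, ← hcos, ← hcos']
            nlinarith
          rw [real_inner_smul_left, real_inner_smul_right, hnorm]
          field_simp
        · rw [real_inner_smul_right, inner_sub_right, real_inner_smul_right, hx₁x₁,
            hcos, mul_one, sub_self, mul_zero]
        · rw [smul_smul, mul_inv_cancel₀ hs, one_smul]; abel
    set c : ℝ := d / (θ₂ - θ₁) with hc
    have hθpos : 0 < θ₂ - θ₁ := by linarith
    have hc0 : 0 ≤ c := div_nonneg hd0 hθpos.le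
    have hc1 : c < 1 := (div_lt_one hθpos).2 hd
    refine ⟨fun t => Real.cos (c * (t - θ₁)) • x₁ + Real.sin (c * (t - θ₁)) • v, ?_, ?_, ?_, ?_⟩
    · intro t _
      exact aux_norm x₁ v hx₁x₁ hvv hvo _
    · simp only [sub_self, mul_zero, Real.cos_zero, Real.sin_zero, one_smul, zero_smul,
        add_zero]
    · show Real.cos (c * (θ₂ - θ₁)) • x₁ + Real.sin (c * (θ₂ - θ₁)) • v = x₂
      rw [div_mul_cancel₀ d hθpos.ne', ← hvx]
    · intro s hs t ht hst
      rw [aux_inner x₁ v hx₁x₁ hvv hvo]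
      have heq : c * (s - θ₁) - c * (t - θ₁) = c * (s - t) := by ring
      rw [heq]
      have habs : |c * (s - t)| ≤ Real.pi := by
        have h1 : |s - t| ≤ θ₂ - θ₁ := by
          rw [abs_le]; constructor <;> [linarith [hs.1, ht.2]; linarith [hs.2, ht.1]]
        rw [abs_mul, abs_of_nonneg hc0]
        calc c * |s - t| ≤ c * (θ₂ - θ₁) := by nlinarith
          _ = d := div_mul_cancel₀ d hθpos.ne'
          _ ≤ Real.pi := hdpi
      have harc : Real.arccos (Real.cos (c * (s - t))) = |c * (s - t)| := by
        rw [← Real.cos_abs, Real.arccos_cos (abs_nonneg _) habs]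
      rw [harc, abs_mul, abs_of_nonneg hc0]
      have hst' : 0 < |s - t| := abs_pos.2 (sub_ne_zero.2 hst)
      calc c * |s - t| < 1 * |s - t| := mul_lt_mul_of_pos_right hc1 hst'
        _ = |s - t| := one_mul _
end

section
/- Let n ≥ 2 and let Λ ⊆ S^{n-1} × ℝ. Then: (a) there are no two points (x,θ), (x',θ') of Λ with θ ≤ θ' joined by a timelike curve (a map φ : [θ,θ'] → S^{n-1} with φ(θ) = x, φ(θ') = x' and arccos⟨φ(s),φ(t)⟩ < |s−t| for all s ≠ t) if and only if there exist E ⊆ S^{n-1} and f : E → ℝ with |f(x) − f(y)| ≤ arccos⟨x,y⟩ for all x,y ∈ E and Λ = {(x, f(x)) : x ∈ E}, i.e. Λ is the graph of a 1-Lipschitz function; (b) there are no two distinct points of Λ joined by a causal curve (a map φ as above with arccos⟨φ(s),φ(t)⟩ ≤ |s−t| for all s,t) if and only if Λ is the graph of a contracting function, i.e. one with |f(x) − f(y)| < arccos⟨x,y⟩ for all x ≠ y in E. -/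
open scoped RealInnerProductSpace

/-- Two points of `S^{n-1} × ℝ` are joined by a timelike curve. -/
def JoinedTimelike (n : ℕ) (p q : EuclideanSpace ℝ (Fin n) × ℝ) : Prop :=
  ∃ φ : ℝ → EuclideanSpace ℝ (Fin n),
    (∀ t ∈ Set.Icc p.2 q.2, ‖φ t‖ = 1) ∧ φ p.2 = p.1 ∧ φ q.2 = q.1 ∧
    ∀ s ∈ Set.Icc p.2 q.2, ∀ t ∈ Set.Icc p.2 q.2, s ≠ t →
      Real.arccos ⟪φ s, φ t⟫ < |s - t|

/-- Two points of `S^{n-1} × ℝ` are joined by a causal curve. -/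
def JoinedCausal (n : ℕ) (p q : EuclideanSpace ℝ (Fin n) × ℝ) : Prop :=
  ∃ φ : ℝ → EuclideanSpace ℝ (Fin n),
    (∀ t ∈ Set.Icc p.2 q.2, ‖φ t‖ = 1) ∧ φ p.2 = p.1 ∧ φ q.2 = q.1 ∧
    ∀ s ∈ Set.Icc p.2 q.2, ∀ t ∈ Set.Icc p.2 q.2,
      Real.arccos ⟪φ s, φ t⟫ ≤ |s - t|

/-!
Achronality of `Λ` amounts to `|θ - θ'| ≤ d(x, x')` for all pairs of its points, and acausality
to the strict inequality for distinct pairs. Indeed, if `d(x, x') < θ' - θ` (resp. `≤`, with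
`θ < θ'`), running along a minimising great circle from `x` to `x'` at the constant speed
`d(x, x') / (θ' - θ) < 1` (resp. `≤ 1`) is a timelike (resp. causal) curve; conversely, the
defining inequality of such a curve, taken at its endpoints, is `d(x, x') < θ' - θ` (resp. `≤`).
Either inequality makes the projection to the sphere injective on `Λ`, so `Λ` is the graph of a
function on its projection, which is then `1`-Lipschitz (resp. contracting).
The great circle needs a unit vector orthogonal to `x`; this is where `n ≥ 2` enters, when
`x' = ±x`.
-/

open Module Real

section Graph

variable {α : Type*} {Λ : Set (α × ℝ)} {d : α → α → ℝ}

theorem exists_graphOn_of_injOn_fst (h : Set.InjOn Prod.fst Λ) :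
    ∃ f : α → ℝ, Λ = (fun x => (x, f x)) '' (Prod.fst '' Λ) ∧ ∀ p ∈ Λ, f p.1 = p.2 := by
  obtain ⟨f, hf⟩ := Set.exists_eq_graphOn_image_fst.2 h
  refine ⟨f, hf, fun p hp => ?_⟩
  rw [hf] at hp
  exact (Set.mem_graphOn.1 hp).2

theorem forall_abs_sub_le_iff_exists_graphOn (hd : ∀ p ∈ Λ, d p.1 p.1 = 0) :
    (∀ p ∈ Λ, ∀ q ∈ Λ, |p.2 - q.2| ≤ d p.1 q.1) ↔
      ∃ (E : Set α) (f : α → ℝ), (∀ x ∈ E, ∀ y ∈ E, |f x - f y| ≤ d x y) ∧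
        Λ = (fun x => (x, f x)) '' E := by
  refine ⟨fun h => ?_, ?_⟩
  · obtain ⟨f, hΛ, hf⟩ := exists_graphOn_of_injOn_fst fun p hp q hq hpq => by
      have := h p hp q hq
      rw [hpq, hd q hq, abs_nonpos_iff, sub_eq_zero] at this
      exact Prod.ext hpq this
    refine ⟨_, f, ?_, hΛ⟩
    rintro _ ⟨p, hp, rfl⟩ _ ⟨q, hq, rfl⟩
    rw [hf p hp, hf q hq]
    exact h p hp q hq
  · rintro ⟨E, f, hf, rfl⟩ _ ⟨x, hx, rfl⟩ _ ⟨y, hy, rfl⟩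
    exact hf x hx y hy

theorem forall_ne_abs_sub_lt_iff_exists_graphOn (hd : ∀ p ∈ Λ, d p.1 p.1 = 0) :
    (∀ p ∈ Λ, ∀ q ∈ Λ, p ≠ q → |p.2 - q.2| < d p.1 q.1) ↔
      ∃ (E : Set α) (f : α → ℝ), (∀ x ∈ E, ∀ y ∈ E, x ≠ y → |f x - f y| < d x y) ∧
        Λ = (fun x => (x, f x)) '' E := by
  refine ⟨fun h => ?_, ?_⟩
  · obtain ⟨f, hΛ, hf⟩ := exists_graphOn_of_injOn_fst fun p hp q hq hpq => by
      by_contra hne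
      have := h p hp q hq hne
      rw [hpq, hd q hq] at this
      exact (abs_nonneg _).not_gt this
    refine ⟨_, f, ?_, hΛ⟩
    rintro _ ⟨p, hp, rfl⟩ _ ⟨q, hq, rfl⟩ hne
    rw [hf p hp, hf q hq]
    exact h p hp q hq fun hpq => hne (congrArg Prod.fst hpq)
  · rintro ⟨E, f, hf, rfl⟩ _ ⟨x, hx, rfl⟩ _ ⟨y, hy, rfl⟩ hne
    exact hf x hx y hy fun hxy => hne (hxy ▸ rfl)

end Graph

section Sphere

variable {V : Type*} [NormedAddCommGroup V] [InnerProductSpace ℝ V]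

theorem abs_real_inner_le_one {x y : V} (hx : ‖x‖ = 1) (hy : ‖y‖ = 1) : |⟪x, y⟫| ≤ 1 := by
  simpa [hx, hy] using abs_real_inner_le_norm x y

theorem arccos_inner_eq_zero_iff {x y : V} (hx : ‖x‖ = 1) (hy : ‖y‖ = 1) :
    arccos ⟪x, y⟫ = 0 ↔ x = y := by
  rw [arccos_eq_zero, ← inner_eq_one_iff_of_norm_eq_one (𝕜 := ℝ) hx hy]
  exact ⟨(abs_le.1 (abs_real_inner_le_one hx hy)).2.antisymm, ge_of_eq⟩

theorem exists_norm_eq_one_inner_eq_zero [FiniteDimensional ℝ V] (hV : 2 ≤ finrank ℝ V) (x : V) :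
    ∃ u : V, ‖u‖ = 1 ∧ ⟪x, u⟫ = 0 := by
  have hK : finrank ℝ (ℝ ∙ x) ≤ 1 := by
    simpa using finrank_span_le_card ({x} : Set V)
  have hKperp : 0 < finrank ℝ (ℝ ∙ x)ᗮ := by
    have := (ℝ ∙ x).finrank_add_finrank_orthogonal
    omega
  obtain ⟨v, hv, hv0⟩ :=
    Submodule.exists_mem_ne_zero_of_ne_bot (Submodule.one_le_finrank_iff.mp hKperp)
  refine ⟨‖v‖⁻¹ • v, norm_smul_inv_norm hv0, ?_⟩
  rw [real_inner_smul_right, Submodule.mem_orthogonal_singleton_iff_inner_right.mp hv, mul_zero]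

theorem exists_norm_eq_one_inner_eq_zero_smul_eq [FiniteDimensional ℝ V] (hV : 2 ≤ finrank ℝ V)
    {x w : V} (hw : ⟪x, w⟫ = 0) : ∃ u : V, ‖u‖ = 1 ∧ ⟪x, u⟫ = 0 ∧ ‖w‖ • u = w := by
  rcases eq_or_ne w 0 with rfl | hw0
  · obtain ⟨u, hu, hxu⟩ := exists_norm_eq_one_inner_eq_zero hV x
    exact ⟨u, hu, hxu, by simp⟩
  · refine ⟨‖w‖⁻¹ • w, norm_smul_inv_norm hw0, ?_, smul_inv_smul₀ (norm_ne_zero_iff.2 hw0) w⟩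
    rw [real_inner_smul_right, hw, mul_zero]

theorem inner_cos_smul_add_sin_smul {x u : V} (hx : ‖x‖ = 1) (hu : ‖u‖ = 1) (hxu : ⟪x, u⟫ = 0)
    (s t : ℝ) : ⟪cos s • x + sin s • u, cos t • x + sin t • u⟫ = cos (s - t) := by
  have hux : ⟪u, x⟫ = 0 := by rw [real_inner_comm, hxu]
  simp only [inner_add_left, inner_add_right, real_inner_smul_left, real_inner_smul_right,
    real_inner_self_eq_norm_sq, hx, hu, hxu, hux, cos_sub]
  ring

theorem exists_great_circle [FiniteDimensional ℝ V] (hV : 2 ≤ finrank ℝ V) {x y : V}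
    (hx : ‖x‖ = 1) (hy : ‖y‖ = 1) :
    ∃ γ : ℝ → V, γ 0 = x ∧ γ (arccos ⟪x, y⟫) = y ∧ ∀ s t, ⟪γ s, γ t⟫ = cos (s - t) := by
  set w := y - ⟪x, y⟫ • x
  have hxx : ⟪x, x⟫ = 1 := by rw [real_inner_self_eq_norm_sq, hx, one_pow]
  have hxw : ⟪x, w⟫ = 0 := by
    rw [inner_sub_right, real_inner_smul_right, hxx, mul_one, sub_self]
  have hyy : ⟪y, y⟫ = 1 := by rw [real_inner_self_eq_norm_sq, hy, one_pow]
  have hw : ‖w‖ = sin (arccos ⟪x, y⟫) := by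
    rw [sin_arccos, ← sqrt_sq (norm_nonneg w), ← real_inner_self_eq_norm_sq]
    congr 1
    simp only [w, inner_sub_left, inner_sub_right, real_inner_smul_left, real_inner_smul_right,
      hxx, hyy, real_inner_comm x y]
    ring
  obtain ⟨u, hu, hxu, hwu⟩ := exists_norm_eq_one_inner_eq_zero_smul_eq hV hxw
  refine ⟨fun t => cos t • x + sin t • u, by simp, ?_, inner_cos_smul_add_sin_smul hx hu hxu⟩
  obtain ⟨hxy₁, hxy₂⟩ := abs_le.1 (abs_real_inner_le_one hx hy)
  simp only [cos_arccos hxy₁ hxy₂, ← hw, hwu, w, add_sub_cancel]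

theorem exists_curve_arccos_inner_eq_mul_abs [FiniteDimensional ℝ V] (hV : 2 ≤ finrank ℝ V)
    {x y : V} (hx : ‖x‖ = 1) (hy : ‖y‖ = 1) {θ θ' : ℝ} (hθ : θ < θ') :
    ∃ φ : ℝ → V, (∀ t, ‖φ t‖ = 1) ∧ φ θ = x ∧ φ θ' = y ∧
      ∀ s ∈ Set.Icc θ θ', ∀ t ∈ Set.Icc θ θ',
        arccos ⟪φ s, φ t⟫ = arccos ⟪x, y⟫ / (θ' - θ) * |s - t| := by
  obtain ⟨γ, hγ₀, hγy, hγ⟩ := exists_great_circle hV hx hy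
  set k := arccos ⟪x, y⟫ / (θ' - θ)
  have hk : 0 ≤ k := div_nonneg (arccos_nonneg _) (sub_pos.2 hθ).le
  refine ⟨fun t => γ (k * (t - θ)), fun t => ?_, by simp [hγ₀], ?_, fun s hs t ht => ?_⟩
  · have := hγ (k * (t - θ)) (k * (t - θ))
    rwa [sub_self, cos_zero, real_inner_self_eq_norm_sq,
      pow_eq_one_iff_of_nonneg (norm_nonneg _) two_ne_zero] at this
  · simp only [k, div_mul_cancel₀ _ (sub_pos.2 hθ).ne', hγy]
  · have hst : |s - t| ≤ θ' - θ := Real.dist_le_of_mem_Icc hs ht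
    have hkst : k * |s - t| ≤ π := calc
      k * |s - t| ≤ k * (θ' - θ) := mul_le_mul_of_nonneg_left hst hk
      _ = arccos ⟪x, y⟫ := div_mul_cancel₀ _ (sub_pos.2 hθ).ne'
      _ ≤ π := arccos_le_pi _
    rw [hγ, ← mul_sub, sub_sub_sub_cancel_right, ← cos_abs, abs_mul, abs_of_nonneg hk,
      arccos_cos (by positivity) hkst]

end Sphere

section EinsteinUniverse

variable {n : ℕ} {p q : EuclideanSpace ℝ (Fin n) × ℝ}

theorem JoinedTimelike.eq_of_snd_eq (h : JoinedTimelike n p q) (hpq : p.2 = q.2) : p = q := by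
  obtain ⟨φ, -, hp, hq, -⟩ := h
  exact Prod.ext (by rw [← hp, ← hq, hpq]) hpq

theorem JoinedTimelike.arccos_lt (h : JoinedTimelike n p q) (hpq : p.2 < q.2) :
    arccos ⟪p.1, q.1⟫ < q.2 - p.2 := by
  obtain ⟨φ, -, hp, hq, hφ⟩ := h
  have := hφ p.2 (Set.left_mem_Icc.2 hpq.le) q.2 (Set.right_mem_Icc.2 hpq.le) hpq.ne
  rwa [hp, hq, abs_sub_comm, abs_of_pos (sub_pos.2 hpq)] at this

theorem JoinedCausal.arccos_le (h : JoinedCausal n p q) (hpq : p.2 ≤ q.2) :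
    arccos ⟪p.1, q.1⟫ ≤ q.2 - p.2 := by
  obtain ⟨φ, -, hp, hq, hφ⟩ := h
  have := hφ p.2 (Set.left_mem_Icc.2 hpq) q.2 (Set.right_mem_Icc.2 hpq)
  rwa [hp, hq, abs_sub_comm, abs_of_nonneg (sub_nonneg.2 hpq)] at this

variable {x y : EuclideanSpace ℝ (Fin n)} {θ θ' : ℝ}

theorem joinedTimelike_of_arccos_lt (hn : 2 ≤ n) (hx : ‖x‖ = 1) (hy : ‖y‖ = 1)
    (h : arccos ⟪x, y⟫ < θ' - θ) : JoinedTimelike n (x, θ) (y, θ') := by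
  have hθ : 0 < θ' - θ := (arccos_nonneg _).trans_lt h
  obtain ⟨φ, hφ, hφθ, hφθ', hφd⟩ :=
    exists_curve_arccos_inner_eq_mul_abs (by simpa using hn) hx hy (sub_pos.1 hθ)
  refine ⟨φ, fun t _ => hφ t, hφθ, hφθ', fun s hs t ht hst => ?_⟩
  rw [hφd s hs t ht]
  exact mul_lt_of_lt_one_left (abs_pos.2 (sub_ne_zero.2 hst)) ((div_lt_one hθ).2 h)

theorem joinedCausal_of_arccos_le (hn : 2 ≤ n) (hx : ‖x‖ = 1) (hy : ‖y‖ = 1) (hθ : θ < θ')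
    (h : arccos ⟪x, y⟫ ≤ θ' - θ) : JoinedCausal n (x, θ) (y, θ') := by
  obtain ⟨φ, hφ, hφθ, hφθ', hφd⟩ :=
    exists_curve_arccos_inner_eq_mul_abs (by simpa using hn) hx hy hθ
  refine ⟨φ, fun t _ => hφ t, hφθ, hφθ', fun s hs t ht => ?_⟩
  rw [hφd s hs t ht]
  exact mul_le_of_le_one_left (abs_nonneg _) ((div_le_one (sub_pos.2 hθ)).2 h)

variable {Λ : Set (EuclideanSpace ℝ (Fin n) × ℝ)}

theorem not_exists_joinedTimelike_iff (hn : 2 ≤ n) (hΛ : ∀ p ∈ Λ, ‖p.1‖ = 1) :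
    (¬ ∃ p ∈ Λ, ∃ q ∈ Λ, p ≠ q ∧ p.2 ≤ q.2 ∧ JoinedTimelike n p q) ↔
      ∀ p ∈ Λ, ∀ q ∈ Λ, |p.2 - q.2| ≤ arccos ⟪p.1, q.1⟫ := by
  refine ⟨fun h p hp q hq => ?_, ?_⟩
  · wlog hpq : p.2 ≤ q.2 generalizing p q
    · rw [abs_sub_comm, real_inner_comm]
      exact this q hq p hp (le_of_not_ge hpq)
    rw [abs_sub_comm, abs_of_nonneg (sub_nonneg.2 hpq)]
    by_contra! hlt
    have hne : p ≠ q := by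
      rintro rfl
      exact (arccos_nonneg _).not_gt (by simpa using hlt)
    exact h ⟨p, hp, q, hq, hne, hpq, joinedTimelike_of_arccos_lt hn (hΛ p hp) (hΛ q hq) hlt⟩
  · rintro h ⟨p, hp, q, hq, hne, hpq, hjoin⟩
    obtain heq | hlt := hpq.eq_or_lt
    · exact hne (hjoin.eq_of_snd_eq heq)
    · have := h p hp q hq
      rw [abs_sub_comm, abs_of_pos (sub_pos.2 hlt)] at this
      exact (hjoin.arccos_lt hlt).not_ge this

theorem not_exists_joinedCausal_iff (hn : 2 ≤ n) (hΛ : ∀ p ∈ Λ, ‖p.1‖ = 1) :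
    (¬ ∃ p ∈ Λ, ∃ q ∈ Λ, p ≠ q ∧ p.2 ≤ q.2 ∧ JoinedCausal n p q) ↔
      ∀ p ∈ Λ, ∀ q ∈ Λ, p ≠ q → |p.2 - q.2| < arccos ⟪p.1, q.1⟫ := by
  refine ⟨fun h p hp q hq hne => ?_, ?_⟩
  · wlog hpq : p.2 ≤ q.2 generalizing p q
    · rw [abs_sub_comm, real_inner_comm]
      exact this q hq p hp hne.symm (le_of_not_ge hpq)
    rw [abs_sub_comm, abs_of_nonneg (sub_nonneg.2 hpq)]
    by_contra! hle
    obtain heq | hlt := hpq.eq_or_lt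
    · have h₀ : arccos ⟪p.1, q.1⟫ = 0 := le_antisymm (by linarith) (arccos_nonneg _)
      exact hne (Prod.ext ((arccos_inner_eq_zero_iff (hΛ p hp) (hΛ q hq)).1 h₀) heq)
    · exact h ⟨p, hp, q, hq, hne, hpq, joinedCausal_of_arccos_le hn (hΛ p hp) (hΛ q hq) hlt hle⟩
  · rintro h ⟨p, hp, q, hq, hne, hpq, hjoin⟩
    have := h p hp q hq hne
    rw [abs_sub_comm, abs_of_nonneg (sub_nonneg.2 hpq)] at this
    exact (hjoin.arccos_le hpq).not_gt this

end EinsteinUniverse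

/-- A subset of `S^{n-1} × ℝ` is achronal (no two of its points are
joined by a timelike curve) iff it is the graph of a `1`-Lipschitz function, and
acausal (no two distinct points joined by a causal curve) iff it is the graph of
a contracting function. -/
theorem achronal_iff_graph_lipschitz (n : ℕ) (hn : 2 ≤ n)
    (Λ : Set (EuclideanSpace ℝ (Fin n) × ℝ)) (hsphere : ∀ p ∈ Λ, ‖p.1‖ = 1) :
    ((¬ ∃ p ∈ Λ, ∃ q ∈ Λ, p ≠ q ∧ p.2 ≤ q.2 ∧ JoinedTimelike n p q) ↔
      ∃ (E : Set (EuclideanSpace ℝ (Fin n))) (f : EuclideanSpace ℝ (Fin n) → ℝ),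
        (∀ x ∈ E, ∀ y ∈ E, |f x - f y| ≤ Real.arccos ⟪x, y⟫) ∧
        Λ = (fun x => (x, f x)) '' E) ∧
    ((¬ ∃ p ∈ Λ, ∃ q ∈ Λ, p ≠ q ∧ p.2 ≤ q.2 ∧ JoinedCausal n p q) ↔
      ∃ (E : Set (EuclideanSpace ℝ (Fin n))) (f : EuclideanSpace ℝ (Fin n) → ℝ),
        (∀ x ∈ E, ∀ y ∈ E, x ≠ y → |f x - f y| < Real.arccos ⟪x, y⟫) ∧
        Λ = (fun x => (x, f x)) '' E) := by
  have hd : ∀ p ∈ Λ, arccos ⟪p.1, p.1⟫ = 0 := fun p hp =>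
    (arccos_inner_eq_zero_iff (hsphere p hp) (hsphere p hp)).2 rfl
  exact ⟨(not_exists_joinedTimelike_iff hn hsphere).trans
      (forall_abs_sub_le_iff_exists_graphOn (d := fun x y => arccos ⟪x, y⟫) hd),
    (not_exists_joinedCausal_iff hn hsphere).trans
      (forall_ne_abs_sub_lt_iff_exists_graphOn (d := fun x y => arccos ⟪x, y⟫) hd)⟩
end

section
/- Let n ≥ 2 and let Λ be a nonempty closed achronal subset of S^{n-1} × ℝ. Then either there exists a ∈ ℝ with Λ ⊆ S^{n-1} × (a, a+π) (Λ is contained in a de Sitter domain), or there exists (x⁺,θ⁺) ∈ Λ such that (−x⁺, θ⁺ − π) ∈ Λ and every (x,θ) ∈ Λ satisfies θ = θ⁺ − arccos⟨x,x⁺⟩ (Λ is pure lightlike: it is contained in the past lightcone of (x⁺,θ⁺) and the future lightcone of the opposite point (−x⁺,θ⁺−π)). -/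
open scoped RealInnerProductSpace

/-- A nonempty closed achronal subset of `S^{n-1} × ℝ` is either
contained in a de Sitter domain `S^{n-1} × (a, a+π)`, or it is pure lightlike:
it contains an element `(x⁺, θ⁺)` together with the opposite point
`(-x⁺, θ⁺ - π)`, and every `(x, θ)` in it satisfies `θ = θ⁺ - arccos ⟪x, x⁺⟫`. -/
theorem closed_achronal_deSitter_or_pure_lightlike (n : ℕ) (hn : 2 ≤ n)
    (Λ : Set (EuclideanSpace ℝ (Fin n) × ℝ)) (hne : Λ.Nonempty)
    (hclosed : IsClosed Λ) (hsphere : ∀ p ∈ Λ, ‖p.1‖ = 1)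
    (hach : ∀ p ∈ Λ, ∀ q ∈ Λ, |p.2 - q.2| ≤ Real.arccos ⟪p.1, q.1⟫) :
    (∃ a : ℝ, ∀ p ∈ Λ, a < p.2 ∧ p.2 < a + Real.pi) ∨
    (∃ p ∈ Λ, (-p.1, p.2 - Real.pi) ∈ Λ ∧
      ∀ q ∈ Λ, q.2 = p.2 - Real.arccos ⟪q.1, p.1⟫) := by
  obtain ⟨p₀, hp₀⟩ := hne
  -- Λ is bounded
  have hbdd : Bornology.IsBounded Λ := by
    apply Bornology.IsBounded.subset
      ((Metric.isBounded_closedBall (x := (0 : EuclideanSpace ℝ (Fin n))) (r := 1)).prod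
        (Metric.isBounded_closedBall (x := p₀.2) (r := Real.pi)))
    intro p hp
    constructor
    · simp [Metric.mem_closedBall, dist_eq_norm, hsphere p hp]
    · have h1 := hach p hp p₀ hp₀
      have h2 : Real.arccos ⟪p.1, p₀.1⟫ ≤ Real.pi := Real.arccos_le_pi _
      simp only [Metric.mem_closedBall, Real.dist_eq]
      linarith
  have hcomp : IsCompact Λ := Metric.isCompact_of_isClosed_isBounded hclosed hbdd
  obtain ⟨pmax, hpmax, hmax⟩ := hcomp.exists_isMaxOn ⟨p₀, hp₀⟩ continuous_snd.continuousOn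
  obtain ⟨pmin, hpmin, hmin⟩ := hcomp.exists_isMinOn ⟨p₀, hp₀⟩ continuous_snd.continuousOn
  have hle : ∀ q ∈ Λ, q.2 ≤ pmax.2 := fun q hq => hmax hq
  have hge : ∀ q ∈ Λ, pmin.2 ≤ q.2 := fun q hq => hmin hq
  have hdiff : pmax.2 - pmin.2 ≤ Real.pi := by
    have h1 := hach pmax hpmax pmin hpmin
    have h2 : Real.arccos ⟪pmax.1, pmin.1⟫ ≤ Real.pi := Real.arccos_le_pi _
    have := abs_le.mp (le_trans h1 h2)
    linarith [this.2]
  rcases lt_or_ge (pmax.2 - pmin.2) Real.pi with hlt | hgeq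
  · left
    refine ⟨(pmin.2 + pmax.2 - Real.pi) / 2, fun p hp => ?_⟩
    have := hle p hp
    have := hge p hp
    constructor <;> linarith
  · right
    have heq : pmax.2 - pmin.2 = Real.pi := le_antisymm hdiff hgeq
    have hinner : ⟪pmax.1, pmin.1⟫ = -1 := by
      have h1 := hach pmax hpmax pmin hpmin
      have h2 : Real.arccos ⟪pmax.1, pmin.1⟫ ≤ Real.pi := Real.arccos_le_pi _
      have habs : |pmax.2 - pmin.2| = Real.pi := by rw [heq]; exact abs_of_nonneg Real.pi_pos.le
      have harc : Real.arccos ⟪pmax.1, pmin.1⟫ = Real.pi := le_antisymm h2 (habs ▸ h1)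
      have hle1 : ⟪pmax.1, pmin.1⟫ ≤ -1 := (Real.arccos_eq_pi).mp harc
      have hb : |⟪pmax.1, pmin.1⟫| ≤ 1 := by
        have := abs_real_inner_le_norm pmax.1 pmin.1
        rw [hsphere pmax hpmax, hsphere pmin hpmin] at this
        simpa using this
      have := (abs_le.mp hb).1
      linarith
    have hneg : pmin.1 = -pmax.1 := by
      have h1 : ⟪pmax.1, -pmin.1⟫ = 1 := by rw [inner_neg_right, hinner]; ring
      have hn1 : ‖-pmin.1‖ = 1 := by rw [norm_neg]; exact hsphere pmin hpmin
      have := (inner_eq_one_iff_of_norm_eq_one (hsphere pmax hpmax) hn1).mp h1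
      rw [this, neg_neg]
    have hmem : (-pmax.1, pmax.2 - Real.pi) ∈ Λ := by
      have : pmin = (-pmax.1, pmax.2 - Real.pi) :=
        Prod.ext hneg (by simp only []; linarith)
      rwa [← this]
    refine ⟨pmax, hpmax, hmem, fun q hq => ?_⟩
    set α := Real.arccos ⟪q.1, pmax.1⟫ with hα
    have h1 := hach q hq pmax hpmax
    have h2 := hach q hq pmin hpmin
    have h3 : Real.arccos ⟪q.1, pmin.1⟫ = Real.pi - α := by
      rw [hneg, inner_neg_right, Real.arccos_neg]
    rw [h3] at h2
    have hq1 := hle q hq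
    have hq2 := hge q hq
    have ha1 := (abs_le.mp h1).1
    have ha2 := (abs_le.mp h2).2
    have : pmin.2 = pmax.2 - Real.pi := by linarith
    linarith
end

section
/- Let Λ be an achronal subset of S^{n-1} × ℝ containing a pair of opposite points, i.e. there is (x₀,θ₀) ∈ Λ with (−x₀, θ₀ + π) ∈ Λ. Then Λ is pure lightlike: every (x,θ) ∈ Λ satisfies θ = θ₀ + arccos⟨x,x₀⟩, so Λ is contained in the future lightcone of (x₀,θ₀). -/
open scoped RealInnerProductSpace

/-- An achronal subset of `S^{n-1} × ℝ` containing a pair of opposite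
points `(x₀, θ₀)` and `(-x₀, θ₀ + π)` is pure lightlike: every `(x, θ)` in it
satisfies `θ = θ₀ + arccos ⟪x, x₀⟫`, i.e. it is contained in the future lightcone
of `(x₀, θ₀)`. -/
theorem achronal_with_opposite_points_pure_lightlike (n : ℕ) (hn : 2 ≤ n)
    (Λ : Set (EuclideanSpace ℝ (Fin n) × ℝ)) (hsphere : ∀ p ∈ Λ, ‖p.1‖ = 1)
    (hach : ∀ p ∈ Λ, ∀ q ∈ Λ, |p.2 - q.2| ≤ Real.arccos ⟪p.1, q.1⟫)
    (x₀ : EuclideanSpace ℝ (Fin n)) (θ₀ : ℝ)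
    (h₀ : (x₀, θ₀) ∈ Λ) (h₁ : (-x₀, θ₀ + Real.pi) ∈ Λ) :
    ∀ p ∈ Λ, p.2 = θ₀ + Real.arccos ⟪p.1, x₀⟫ := by
  intro p hp
  have ha := hach p hp _ h₀
  have hb := hach p hp _ h₁
  simp only at ha hb
  rw [inner_neg_right, Real.arccos_neg] at hb
  rw [abs_le] at ha hb
  linarith [ha.1, ha.2, hb.1, hb.2]
end

section
/- Let Λ ⊆ ℝ⁴ be a set of nonzero null vectors such that any two distinct elements of Λ are linearly independent and ⟨u|v⟩ ≤ 0 for all u, v ∈ Λ. Then the following are equivalent: (i) ⟨u|v⟩ < 0 for all distinct u, v ∈ Λ; (ii) every point p of the convex hull of Λ (over ℝ) with Q(p) = 0 is an extreme point of the convex hull of Λ. (The paper's lemma: an achronal subset of Ein₂ is strictly achronal precisely when the intersection points between its convex hull and the null cone are all extreme points of the hull.) -/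
/-!
The argument works for any bilinear form `B` over an ordered field, symmetric for the converse.
Since `B ≤ 0` on pairs of points of `Λ`, bilinearity propagates `B ≤ 0` to pairs of points of the
convex hull. If a null point `z` lies in the open segment between hull points `x` and `y`, then
`B z z` is a positive combination of `B x x`, `B x y + B y x` and `B y y`, so all of them vanish.
Under strict negativity this forces `x = y`; by convexity of `{x ∈ hull | B x x = 0 → x ∈ Λ}` the
null points of the hull are points of `Λ`, and the same argument shows they are extreme.
Conversely, if `B u v = 0` for distinct `u, v ∈ Λ`, the midpoint of `u` and `v` is a null point of
the hull which is not extreme.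
-/

/-- The polar bilinear form of the quadratic form `Q(u,v,x,y) = -u² - v² + x² + y²`
of signature `(2,2)` on `ℝ⁴`. -/
def polarForm22 (p q : ℝ × ℝ × ℝ × ℝ) : ℝ :=
  -(p.1 * q.1) - p.2.1 * q.2.1 + p.2.2.1 * q.2.2.1 + p.2.2.2 * q.2.2.2

namespace LinearMap.BilinForm

theorem apply_smul_add_smul_self {R M : Type*} [CommRing R] [AddCommGroup M] [Module R M]
    (B : LinearMap.BilinForm R M) (a b : R) (x y : M) :
    B (a • x + b • y) (a • x + b • y) =
      a * a * B x x + a * b * (B x y + B y x) + b * b * B y y := by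
  simp only [map_add, map_smul, LinearMap.add_apply, LinearMap.smul_apply, smul_eq_mul]
  ring

variable {𝕜 E : Type*} [Field 𝕜] [LinearOrder 𝕜] [IsStrictOrderedRing 𝕜]
  [AddCommGroup E] [Module 𝕜 E] (B : LinearMap.BilinForm 𝕜 E) {s : Set E}

theorem apply_nonpos_of_mem_convexHull (hle : ∀ u ∈ s, ∀ v ∈ s, B u v ≤ 0) ⦃x y : E⦄
    (hx : x ∈ convexHull 𝕜 s) (hy : y ∈ convexHull 𝕜 s) : B x y ≤ 0 := by
  have hs : ∀ u ∈ s, ∀ y ∈ convexHull 𝕜 s, B u y ≤ 0 := fun u hu =>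
    convexHull_min (fun v hv => hle u hu v hv) (convex_halfSpace_le (B u).isLinear 0)
  exact convexHull_min (t := {x | B.flip y x ≤ 0}) (fun u hu => hs u hu y hy)
    (convex_halfSpace_le (B.flip y).isLinear 0) hx

theorem apply_eq_zero_of_mem_openSegment (hle : ∀ u ∈ s, ∀ v ∈ s, B u v ≤ 0) {x y z : E}
    (hx : x ∈ convexHull 𝕜 s) (hy : y ∈ convexHull 𝕜 s) (hz : z ∈ openSegment 𝕜 x y)
    (hzz : B z z = 0) : B x x = 0 ∧ B y y = 0 ∧ B x y = 0 := by
  have hnonpos := B.apply_nonpos_of_mem_convexHull hle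
  have hxy := hnonpos hx hy
  have hyx := hnonpos hy hx
  obtain ⟨a, b, ha, hb, -, rfl⟩ := hz
  rw [apply_smul_add_smul_self] at hzz
  have h₁ : a * a * B x x ≤ 0 := mul_nonpos_of_nonneg_of_nonpos (by positivity) (hnonpos hx hx)
  have h₂ : a * b * (B x y + B y x) ≤ 0 :=
    mul_nonpos_of_nonneg_of_nonpos (by positivity) (add_nonpos hxy hyx)
  have h₃ : b * b * B y y ≤ 0 := mul_nonpos_of_nonneg_of_nonpos (by positivity) (hnonpos hy hy)
  have hsum : B x y + B y x = 0 := by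
    simpa [ha.ne', hb.ne'] using (by linarith : a * b * (B x y + B y x) = 0)
  refine ⟨?_, ?_, by linarith⟩
  · simpa [ha.ne'] using (by linarith : a * a * B x x = 0)
  · simpa [hb.ne'] using (by linarith : b * b * B y y = 0)

theorem mem_of_mem_convexHull_of_apply_self_eq_zero (hle : ∀ u ∈ s, ∀ v ∈ s, B u v ≤ 0)
    (hlt : ∀ u ∈ s, ∀ v ∈ s, u ≠ v → B u v < 0) {p : E}
    (hp : p ∈ convexHull 𝕜 s) (hpp : B p p = 0) : p ∈ s := by
  suffices convexHull 𝕜 s ⊆ {x ∈ convexHull 𝕜 s | B x x = 0 → x ∈ s} from (this hp).2 hpp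
  refine convexHull_min (fun u hu => ⟨subset_convexHull 𝕜 s hu, fun _ => hu⟩) ?_
  refine convex_iff_openSegment_subset.2 fun x ⟨hx, hxs⟩ y ⟨hy, hys⟩ z hz =>
    ⟨(convex_convexHull 𝕜 s).openSegment_subset hx hy hz, fun hzz => ?_⟩
  obtain ⟨hxx, hyy, hxy⟩ := B.apply_eq_zero_of_mem_openSegment hle hx hy hz hzz
  obtain rfl : x = y := by
    by_contra hne
    exact (hlt x (hxs hxx) y (hys hyy) hne).ne hxy
  rw [openSegment_same] at hz
  exact hz ▸ hxs hxx

theorem mem_extremePoints_convexHull_of_apply_self_eq_zero (hle : ∀ u ∈ s, ∀ v ∈ s, B u v ≤ 0)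
    (hlt : ∀ u ∈ s, ∀ v ∈ s, u ≠ v → B u v < 0) {p : E}
    (hp : p ∈ convexHull 𝕜 s) (hpp : B p p = 0) : p ∈ (convexHull 𝕜 s).extremePoints 𝕜 := by
  refine ⟨hp, fun x hx y hy hpxy => ?_⟩
  obtain ⟨hxx, hyy, hxy⟩ := B.apply_eq_zero_of_mem_openSegment hle hx hy hpxy hpp
  obtain rfl : x = y := by
    by_contra hne
    exact (hlt x (B.mem_of_mem_convexHull_of_apply_self_eq_zero hle hlt hx hxx) y
      (B.mem_of_mem_convexHull_of_apply_self_eq_zero hle hlt hy hyy) hne).ne hxy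
  rw [openSegment_same] at hpxy
  exact hpxy.symm

theorem apply_lt_zero_of_forall_apply_self_eq_zero_mem_extremePoints (hB : B.IsSymm)
    (hnull : ∀ u ∈ s, B u u = 0) (hle : ∀ u ∈ s, ∀ v ∈ s, B u v ≤ 0)
    (hext : ∀ p ∈ convexHull 𝕜 s, B p p = 0 → p ∈ (convexHull 𝕜 s).extremePoints 𝕜) :
    ∀ u ∈ s, ∀ v ∈ s, u ≠ v → B u v < 0 := by
  intro u hu v hv huv
  refine (hle u hu v hv).lt_of_ne fun horth => huv ?_
  set m := (2⁻¹ : 𝕜) • u + (2⁻¹ : 𝕜) • v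
  have hm : m ∈ openSegment 𝕜 u v := ⟨2⁻¹, 2⁻¹, by norm_num, by norm_num, by norm_num, rfl⟩
  have hmm : B m m = 0 := by
    rw [apply_smul_add_smul_self, hnull u hu, hnull v hv, hB.eq v u, ← horth]
    ring
  have hu' := subset_convexHull 𝕜 s hu
  have hv' := subset_convexHull 𝕜 s hv
  obtain ⟨-, hmext⟩ :=
    mem_extremePoints.1 (hext m ((convex_convexHull 𝕜 s).openSegment_subset hu' hv' hm) hmm)
  obtain ⟨hum, hvm⟩ := hmext u hu' v hv' hm
  exact hum.trans hvm.symm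

end LinearMap.BilinForm

def polarBilinForm22 : LinearMap.BilinForm ℝ (ℝ × ℝ × ℝ × ℝ) :=
  LinearMap.mk₂ ℝ polarForm22 (fun _ _ _ => by simp [polarForm22]; ring)
    (fun _ _ _ => by simp [polarForm22]; ring) (fun _ _ _ => by simp [polarForm22]; ring)
    (fun _ _ _ => by simp [polarForm22]; ring)

theorem polarBilinForm22_apply (p q : ℝ × ℝ × ℝ × ℝ) : polarBilinForm22 p q = polarForm22 p q :=
  rfl

theorem isSymm_polarBilinForm22 : polarBilinForm22.IsSymm :=
  ⟨fun p q => by simp only [polarBilinForm22_apply, polarForm22]; ring⟩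

theorem strictly_achronal_iff_null_extreme_general (Λ : Set (ℝ × ℝ × ℝ × ℝ))
    (hnull : ∀ u ∈ Λ, polarForm22 u u = 0)
    (hpair : ∀ u ∈ Λ, ∀ v ∈ Λ, polarForm22 u v ≤ 0) :
    (∀ u ∈ Λ, ∀ v ∈ Λ, u ≠ v → polarForm22 u v < 0) ↔
    (∀ p ∈ convexHull ℝ Λ, polarForm22 p p = 0 →
      p ∈ Set.extremePoints ℝ (convexHull ℝ Λ)) := by
  simp only [← polarBilinForm22_apply] at hnull hpair ⊢
  exact ⟨fun hlt p hp hpp =>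
      polarBilinForm22.mem_extremePoints_convexHull_of_apply_self_eq_zero hpair hlt hp hpp,
    polarBilinForm22.apply_lt_zero_of_forall_apply_self_eq_zero_mem_extremePoints
      isSymm_polarBilinForm22 hnull hpair⟩

/-- Let `Λ` be a set of nonzero null vectors of `ℝ^{2,2}`, pairwise
linearly independent, with pairwise nonpositive scalar products. Then all pairwise
scalar products of distinct elements are negative if and only if every null point
of the convex hull of `Λ` is an extreme point of the hull. -/
theorem strictly_achronal_iff_null_extreme (Λ : Set (ℝ × ℝ × ℝ × ℝ))
    (hnull : ∀ u ∈ Λ, polarForm22 u u = 0)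
    (hnz : ∀ u ∈ Λ, u ≠ 0)
    (hindep : ∀ u ∈ Λ, ∀ v ∈ Λ, u ≠ v → ∀ c : ℝ, v ≠ c • u)
    (hpair : ∀ u ∈ Λ, ∀ v ∈ Λ, polarForm22 u v ≤ 0) :
    (∀ u ∈ Λ, ∀ v ∈ Λ, u ≠ v → polarForm22 u v < 0) ↔
    (∀ p ∈ convexHull ℝ Λ, polarForm22 p p = 0 →
      p ∈ Set.extremePoints ℝ (convexHull ℝ Λ)) :=
  strictly_achronal_iff_null_extreme_general Λ hnull hpair
end

section
/- Let a, b, c ∈ ℝ⁴ be null vectors with ⟨a|b⟩ < 0, ⟨b|c⟩ < 0 and ⟨a|c⟩ < 0 (three pairwise non-causally related null directions). If w ∈ ℝ⁴ satisfies ⟨w|a⟩ = ⟨w|b⟩ = ⟨w|c⟩ = 0, then w = 0 or Q(w) < 0. (The paper's claim, in the proof that the closure of the invisible domain of a proper achronal set lies in an affine patch: a linear hyperplane containing a nonelementary achronal subset of Ein₂ must be spacelike, i.e. its Q-orthogonal direction is timelike.) -/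
lemma aux_timelike_endgame (d s z : ℝ) (hdneg : d < 0) (hkey : d^2*z = s^2*d) :
    z < 0 ∨ (z = 0 ∧ s = 0) := by
  have hd2 : 0 < d * d := mul_pos_of_neg_of_neg hdneg hdneg
  have hsd : s^2 * d ≤ 0 := mul_nonpos_of_nonneg_of_nonpos (sq_nonneg s) hdneg.le
  have hzle : z ≤ 0 := by nlinarith [hkey, hsd, hd2]
  rcases hzle.lt_or_eq with hlt | heq
  · exact Or.inl hlt
  · refine Or.inr ⟨heq, ?_⟩
    have hsd0 : s^2 * d = 0 := by rw [← hkey, heq]; ring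
    have hss : s^2 = 0 := by
      rcases mul_eq_zero.mp hsd0 with h | h
      · exact h
      · exact absurd h (ne_of_lt hdneg)
    exact pow_eq_zero_iff two_ne_zero |>.mp hss

set_option maxHeartbeats 2000000 in
/-- If `a, b, c` are null vectors of `ℝ^{2,2}` with pairwise negative
scalar products, then any vector `w` that is `Q`-orthogonal to all three of them is
either zero or timelike (`Q(w) < 0`). -/
theorem orthogonal_to_three_null_is_timelike (a b c w : ℝ × ℝ × ℝ × ℝ)
    (ha : polarForm22 a a = 0) (hb : polarForm22 b b = 0) (hc : polarForm22 c c = 0)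
    (hab : polarForm22 a b < 0) (hbc : polarForm22 b c < 0)
    (hac : polarForm22 a c < 0)
    (hwa : polarForm22 w a = 0) (hwb : polarForm22 w b = 0)
    (hwc : polarForm22 w c = 0) :
    w = 0 ∨ polarForm22 w w < 0 := by
  obtain ⟨a1, a2, a3, a4⟩ := a
  obtain ⟨b1, b2, b3, b4⟩ := b
  obtain ⟨c1, c2, c3, c4⟩ := c
  obtain ⟨w1, w2, w3, w4⟩ := w
  simp only [polarForm22] at ha hb hc hab hbc hac hwa hwb hwc ⊢
  obtain ⟨d, hd⟩ : ∃ x : ℝ, x = (((1)*a4^2 + (1)*a3^2 + (-1)*a2^2 + (-1)*a1^2)*((1)*b4^2 + (1)*b3^2 + (-1)*b2^2 + (-1)*b1^2)*((1)*c4^2 + (1)*c3^2 + (-1)*c2^2 + (-1)*c1^2) + 2*((1)*a4*b4 + (1)*a3*b3 + (-1)*a2*b2 + (-1)*a1*b1)*((1)*a4*c4 + (1)*a3*c3 + (-1)*a2*c2 + (-1)*a1*c1)*((1)*b4*c4 + (1)*b3*c3 + (-1)*b2*c2 + (-1)*b1*c1) - ((1)*a4^2 + (1)*a3^2 + (-1)*a2^2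 + (-1)*a1^2)*((1)*b4*c4 + (1)*b3*c3 + (-1)*b2*c2 + (-1)*b1*c1)^2 - ((1)*b4^2 + (1)*b3^2 + (-1)*b2^2 + (-1)*b1^2)*((1)*a4*c4 + (1)*a3*c3 + (-1)*a2*c2 + (-1)*a1*c1)^2 - ((1)*c4^2 + (1)*c3^2 + (-1)*c2^2 + (-1)*c1^2)*((1)*a4*b4 + (1)*a3*b3 + (-1)*a2*b2 + (-1)*a1*b1)^2) := ⟨_, rfl⟩
  obtain ⟨s, hs⟩ : ∃ x : ℝ, x = ((1)*a4*b3*c2*w1 + (-1)*a4*b3*c1*w2 + (-1)*a4*b2*c3*w1 + (1)*a4*b2*c1*w3 + (1)*a4*b1*c3*w2 + (-1)*a4*b1*c2*w3 + (-1)*a3*b4*c2*w1 + (1)*a3*b4*c1*w2 + (1)*a3*b2*c4*w1 + (-1)*a3*b2*c1*w4 + (-1)*a3*b1*c4*w2 + (1)*a3*b1*c2*w4 + (1)*a2*b4*c3*w1 + (-1)*a2*b4*c1*w3 + (-1)*a2*b3*c4*w1 + (1)*a2*b3*c1*w4 + (1)*a2*b1*c4*w3 + (-1)*a2*b1*c3*w4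 + (-1)*a1*b4*c3*w2 + (1)*a1*b4*c2*w3 + (1)*a1*b3*c4*w2 + (-1)*a1*b3*c2*w4 + (-1)*a1*b2*c4*w3 + (1)*a1*b2*c3*w4) := ⟨_, rfl⟩
  obtain ⟨n1, hn1⟩ : ∃ x : ℝ, x = ((-1)*a4*b3*c2 + (1)*a4*b2*c3 + (1)*a3*b4*c2 + (-1)*a3*b2*c4 + (-1)*a2*b4*c3 + (1)*a2*b3*c4) := ⟨_, rfl⟩
  obtain ⟨n2, hn2⟩ : ∃ x : ℝ, x = ((1)*a4*b3*c1 + (-1)*a4*b1*c3 + (-1)*a3*b4*c1 + (1)*a3*b1*c4 + (1)*a1*b4*c3 + (-1)*a1*b3*c4) := ⟨_, rfl⟩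
  obtain ⟨n3, hn3⟩ : ∃ x : ℝ, x = ((1)*a4*b2*c1 + (-1)*a4*b1*c2 + (-1)*a2*b4*c1 + (1)*a2*b1*c4 + (1)*a1*b4*c2 + (-1)*a1*b2*c4) := ⟨_, rfl⟩
  obtain ⟨n4, hn4⟩ : ∃ x : ℝ, x = ((-1)*a3*b2*c1 + (1)*a3*b1*c2 + (1)*a2*b3*c1 + (-1)*a2*b1*c3 + (-1)*a1*b3*c2 + (1)*a1*b2*c3) := ⟨_, rfl⟩
  have hdval : d = 2*((1)*a4*b4 + (1)*a3*b3 + (-1)*a2*b2 + (-1)*a1*b1)*((1)*a4*c4 + (1)*a3*c3 + (-1)*a2*c2 + (-1)*a1*c1)*((1)*b4*c4 + (1)*b3*c3 + (-1)*b2*c2 + (-1)*b1*c1) := by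
    linear_combination hd + (((1)*b4^2 + (1)*b3^2 + (-1)*b2^2 + (-1)*b1^2)*((1)*c4^2 + (1)*c3^2 + (-1)*c2^2 + (-1)*c1^2) - ((1)*b4*c4 + (1)*b3*c3 + (-1)*b2*c2 + (-1)*b1*c1)^2)*ha + (-((1)*a4*c4 + (1)*a3*c3 + (-1)*a2*c2 + (-1)*a1*c1)^2)*hb + (-((1)*a4*b4 + (1)*a3*b3 + (-1)*a2*b2 + (-1)*a1*b1)^2)*hc
  have hdneg : d < 0 := by
    have h1 := mul_neg_of_pos_of_neg (mul_pos_of_neg_of_neg hab hac) hbc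
    linarith [hdval, h1]
  have hQn : d = -n1^2 - n2^2 + n3^2 + n4^2 := by
    linear_combination hd + (((-1)*a4*b3*c2 + (1)*a4*b2*c3 + (1)*a3*b4*c2 + (-1)*a3*b2*c4 + (-1)*a2*b4*c3 + (1)*a2*b3*c4) + n1)*hn1 + (((1)*a4*b3*c1 + (-1)*a4*b1*c3 + (-1)*a3*b4*c1 + (1)*a3*b1*c4 + (1)*a1*b4*c3 + (-1)*a1*b3*c4) + n2)*hn2 + (-(((1)*a4*b2*c1 + (-1)*a4*b1*c2 + (-1)*a2*b4*c1 + (1)*a2*b1*c4 + (1)*a1*b4*c2 + (-1)*a1*b2*c4) + n3))*hn3 + (-(((-1)*a3*b2*c1 + (1)*a3*b1*c2 + (1)*a2*b3*c1 + (-1)*a2*b1*c3 + (-1)*a1*b3*c2 + (1)*a1*b2*c3) + n4))*hn4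
  have hu1 : d * w1 = s * n1 := by
    linear_combination w1*hd - ((-1)*a4*b3*c2 + (1)*a4*b2*c3 + (1)*a3*b4*c2 + (-1)*a3*b2*c4 + (-1)*a2*b4*c3 + (1)*a2*b3*c4)*hs - s*hn1 + ((1)*a4*b3*b4*c1*c3 + (-1)*a4*b3^2*c1*c4 + (-1)*a4*b2*b4*c1*c2 + (1)*a4*b2^2*c1*c4 + (-1)*a4*b1*b4*c3^2 + (1)*a4*b1*b4*c2^2 + (1)*a4*b1*b3*c3*c4 + (-1)*a4*b1*b2*c2*c4 + (-1)*a3*b4^2*c1*c3 + (1)*a3*b3*b4*c1*c4 + (-1)*a3*b2*b3*c1*c2 + (1)*a3*b2^2*c1*c3 + (1)*a3*b1*b4*c3*c4 + (-1)*a3*b1*b3*c4^2 + (1)*a3*b1*b3*c2^2 + (-1)*a3*b1*b2*c2*c3 + (1)*a2*b4^2*c1*c2 + (1)*a2*b3^2*c1*c2 + (-1)*a2*b2*b4*c1*c4 + (-1)*a2*b2*b3*c1*c3 + (-1)*a2*b1*b4*c2*c4 + (-1)*a2*b1*b3*c2*c3 + (1)*a2*b1*b2*c4^2 + (1)*a2*b1*b2*c3^2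 + (1)*a1*b4^2*c3^2 + (-1)*a1*b4^2*c2^2 + (-2)*a1*b3*b4*c3*c4 + (1)*a1*b3^2*c4^2 + (-1)*a1*b3^2*c2^2 + (2)*a1*b2*b4*c2*c4 + (2)*a1*b2*b3*c2*c3 + (-1)*a1*b2^2*c4^2 + (-1)*a1*b2^2*c3^2)*hwa + ((-1)*a4^2*b3*c1*c3 + (1)*a4^2*b2*c1*c2 + (1)*a4^2*b1*c3^2 + (-1)*a4^2*b1*c2^2 + (1)*a3*a4*b4*c1*c3 + (1)*a3*a4*b3*c1*c4 + (-2)*a3*a4*b1*c3*c4 + (-1)*a3^2*b4*c1*c4 + (1)*a3^2*b2*c1*c2 + (1)*a3^2*b1*c4^2 + (-1)*a3^2*b1*c2^2 + (-1)*a2*a4*b4*c1*c2 + (-1)*a2*a4*b2*c1*c4 + (2)*a2*a4*b1*c2*c4 + (-1)*a2*a3*b3*c1*c2 + (-1)*a2*a3*b2*c1*c3 + (2)*a2*a3*b1*c2*c3 + (1)*a2^2*b4*c1*c4 + (1)*a2^2*b3*c1*c3 + (-1)*a2^2*b1*c4^2 + (-1)*a2^2*b1*c3^2 + (-1)*a1*a4*b4*c3^2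 + (1)*a1*a4*b4*c2^2 + (1)*a1*a4*b3*c3*c4 + (-1)*a1*a4*b2*c2*c4 + (1)*a1*a3*b4*c3*c4 + (-1)*a1*a3*b3*c4^2 + (1)*a1*a3*b3*c2^2 + (-1)*a1*a3*b2*c2*c3 + (-1)*a1*a2*b4*c2*c4 + (-1)*a1*a2*b3*c2*c3 + (1)*a1*a2*b2*c4^2 + (1)*a1*a2*b2*c3^2)*hwb + ((1)*a4^2*b3^2*c1 + (-1)*a4^2*b2^2*c1 + (-1)*a4^2*b1*b3*c3 + (1)*a4^2*b1*b2*c2 + (-2)*a3*a4*b3*b4*c1 + (1)*a3*a4*b1*b4*c3 + (1)*a3*a4*b1*b3*c4 + (1)*a3^2*b4^2*c1 + (-1)*a3^2*b2^2*c1 + (-1)*a3^2*b1*b4*c4 + (1)*a3^2*b1*b2*c2 + (2)*a2*a4*b2*b4*c1 + (-1)*a2*a4*b1*b4*c2 + (-1)*a2*a4*b1*b2*c4 + (2)*a2*a3*b2*b3*c1 + (-1)*a2*a3*b1*b3*c2 + (-1)*a2*a3*b1*b2*c3 + (-1)*a2^2*b4^2*c1 + (-1)*a2^2*b3^2*c1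 + (1)*a2^2*b1*b4*c4 + (1)*a2^2*b1*b3*c3 + (1)*a1*a4*b3*b4*c3 + (-1)*a1*a4*b3^2*c4 + (-1)*a1*a4*b2*b4*c2 + (1)*a1*a4*b2^2*c4 + (-1)*a1*a3*b4^2*c3 + (1)*a1*a3*b3*b4*c4 + (-1)*a1*a3*b2*b3*c2 + (1)*a1*a3*b2^2*c3 + (1)*a1*a2*b4^2*c2 + (1)*a1*a2*b3^2*c2 + (-1)*a1*a2*b2*b4*c4 + (-1)*a1*a2*b2*b3*c3)*hwc
  have hu2 : d * w2 = s * n2 := by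
    linear_combination w2*hd - ((1)*a4*b3*c1 + (-1)*a4*b1*c3 + (-1)*a3*b4*c1 + (1)*a3*b1*c4 + (1)*a1*b4*c3 + (-1)*a1*b3*c4)*hs - s*hn2 + ((1)*a4*b3*b4*c2*c3 + (-1)*a4*b3^2*c2*c4 + (-1)*a4*b2*b4*c3^2 + (1)*a4*b2*b4*c1^2 + (1)*a4*b2*b3*c3*c4 + (-1)*a4*b1*b4*c1*c2 + (-1)*a4*b1*b2*c1*c4 + (1)*a4*b1^2*c2*c4 + (-1)*a3*b4^2*c2*c3 + (1)*a3*b3*b4*c2*c4 + (1)*a3*b2*b4*c3*c4 + (-1)*a3*b2*b3*c4^2 + (1)*a3*b2*b3*c1^2 + (-1)*a3*b1*b3*c1*c2 + (-1)*a3*b1*b2*c1*c3 + (1)*a3*b1^2*c2*c3 + (1)*a2*b4^2*c3^2 + (-1)*a2*b4^2*c1^2 + (-2)*a2*b3*b4*c3*c4 + (1)*a2*b3^2*c4^2 + (-1)*a2*b3^2*c1^2 + (2)*a2*b1*b4*c1*c4 + (2)*a2*b1*b3*c1*c3 + (-1)*a2*b1^2*c4^2 + (-1)*a2*b1^2*c3^2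 + (1)*a1*b4^2*c1*c2 + (1)*a1*b3^2*c1*c2 + (-1)*a1*b2*b4*c1*c4 + (-1)*a1*b2*b3*c1*c3 + (-1)*a1*b1*b4*c2*c4 + (-1)*a1*b1*b3*c2*c3 + (1)*a1*b1*b2*c4^2 + (1)*a1*b1*b2*c3^2)*hwa + ((-1)*a4^2*b3*c2*c3 + (1)*a4^2*b2*c3^2 + (-1)*a4^2*b2*c1^2 + (1)*a4^2*b1*c1*c2 + (1)*a3*a4*b4*c2*c3 + (1)*a3*a4*b3*c2*c4 + (-2)*a3*a4*b2*c3*c4 + (-1)*a3^2*b4*c2*c4 + (1)*a3^2*b2*c4^2 + (-1)*a3^2*b2*c1^2 + (1)*a3^2*b1*c1*c2 + (-1)*a2*a4*b4*c3^2 + (1)*a2*a4*b4*c1^2 + (1)*a2*a4*b3*c3*c4 + (-1)*a2*a4*b1*c1*c4 + (1)*a2*a3*b4*c3*c4 + (-1)*a2*a3*b3*c4^2 + (1)*a2*a3*b3*c1^2 + (-1)*a2*a3*b1*c1*c3 + (-1)*a1*a4*b4*c1*c2 + (2)*a1*a4*b2*c1*c4 + (-1)*a1*a4*b1*c2*c4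 + (-1)*a1*a3*b3*c1*c2 + (2)*a1*a3*b2*c1*c3 + (-1)*a1*a3*b1*c2*c3 + (-1)*a1*a2*b4*c1*c4 + (-1)*a1*a2*b3*c1*c3 + (1)*a1*a2*b1*c4^2 + (1)*a1*a2*b1*c3^2 + (1)*a1^2*b4*c2*c4 + (1)*a1^2*b3*c2*c3 + (-1)*a1^2*b2*c4^2 + (-1)*a1^2*b2*c3^2)*hwb + ((1)*a4^2*b3^2*c2 + (-1)*a4^2*b2*b3*c3 + (1)*a4^2*b1*b2*c1 + (-1)*a4^2*b1^2*c2 + (-2)*a3*a4*b3*b4*c2 + (1)*a3*a4*b2*b4*c3 + (1)*a3*a4*b2*b3*c4 + (1)*a3^2*b4^2*c2 + (-1)*a3^2*b2*b4*c4 + (1)*a3^2*b1*b2*c1 + (-1)*a3^2*b1^2*c2 + (1)*a2*a4*b3*b4*c3 + (-1)*a2*a4*b3^2*c4 + (-1)*a2*a4*b1*b4*c1 + (1)*a2*a4*b1^2*c4 + (-1)*a2*a3*b4^2*c3 + (1)*a2*a3*b3*b4*c4 + (-1)*a2*a3*b1*b3*c1 + (1)*a2*a3*b1^2*c3 + (-1)*a1*a4*b2*b4*c1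 + (2)*a1*a4*b1*b4*c2 + (-1)*a1*a4*b1*b2*c4 + (-1)*a1*a3*b2*b3*c1 + (2)*a1*a3*b1*b3*c2 + (-1)*a1*a3*b1*b2*c3 + (1)*a1*a2*b4^2*c1 + (1)*a1*a2*b3^2*c1 + (-1)*a1*a2*b1*b4*c4 + (-1)*a1*a2*b1*b3*c3 + (-1)*a1^2*b4^2*c2 + (-1)*a1^2*b3^2*c2 + (1)*a1^2*b2*b4*c4 + (1)*a1^2*b2*b3*c3)*hwc
  have hu3 : d * w3 = s * n3 := by
    linear_combination w3*hd - ((1)*a4*b2*c1 + (-1)*a4*b1*c2 + (-1)*a2*b4*c1 + (1)*a2*b1*c4 + (1)*a1*b4*c2 + (-1)*a1*b2*c4)*hs - s*hn3 + ((1)*a4*b3*b4*c2^2 + (1)*a4*b3*b4*c1^2 + (-1)*a4*b2*b4*c2*c3 + (-1)*a4*b2*b3*c2*c4 + (1)*a4*b2^2*c3*c4 + (-1)*a4*b1*b4*c1*c3 + (-1)*a4*b1*b3*c1*c4 + (1)*a4*b1^2*c3*c4 + (-1)*a3*b4^2*c2^2 + (-1)*a3*b4^2*c1^2 + (2)*a3*b2*b4*c2*c4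 + (-1)*a3*b2^2*c4^2 + (1)*a3*b2^2*c1^2 + (2)*a3*b1*b4*c1*c4 + (-2)*a3*b1*b2*c1*c2 + (-1)*a3*b1^2*c4^2 + (1)*a3*b1^2*c2^2 + (1)*a2*b4^2*c2*c3 + (-1)*a2*b3*b4*c2*c4 + (-1)*a2*b2*b4*c3*c4 + (1)*a2*b2*b3*c4^2 + (-1)*a2*b2*b3*c1^2 + (1)*a2*b1*b3*c1*c2 + (1)*a2*b1*b2*c1*c3 + (-1)*a2*b1^2*c2*c3 + (1)*a1*b4^2*c1*c3 + (-1)*a1*b3*b4*c1*c4 + (1)*a1*b2*b3*c1*c2 + (-1)*a1*b2^2*c1*c3 + (-1)*a1*b1*b4*c3*c4 + (1)*a1*b1*b3*c4^2 + (-1)*a1*b1*b3*c2^2 + (1)*a1*b1*b2*c2*c3)*hwa + ((-1)*a4^2*b3*c2^2 + (-1)*a4^2*b3*c1^2 + (1)*a4^2*b2*c2*c3 + (1)*a4^2*b1*c1*c3 + (1)*a3*a4*b4*c2^2 + (1)*a3*a4*b4*c1^2 + (-1)*a3*a4*b2*c2*c4 + (-1)*a3*a4*b1*c1*c4 + (-1)*a2*a4*b4*c2*c3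 + (2)*a2*a4*b3*c2*c4 + (-1)*a2*a4*b2*c3*c4 + (-1)*a2*a3*b4*c2*c4 + (1)*a2*a3*b2*c4^2 + (-1)*a2*a3*b2*c1^2 + (1)*a2*a3*b1*c1*c2 + (1)*a2^2*b4*c3*c4 + (-1)*a2^2*b3*c4^2 + (1)*a2^2*b3*c1^2 + (-1)*a2^2*b1*c1*c3 + (-1)*a1*a4*b4*c1*c3 + (2)*a1*a4*b3*c1*c4 + (-1)*a1*a4*b1*c3*c4 + (-1)*a1*a3*b4*c1*c4 + (1)*a1*a3*b2*c1*c2 + (1)*a1*a3*b1*c4^2 + (-1)*a1*a3*b1*c2^2 + (-2)*a1*a2*b3*c1*c2 + (1)*a1*a2*b2*c1*c3 + (1)*a1*a2*b1*c2*c3 + (1)*a1^2*b4*c3*c4 + (-1)*a1^2*b3*c4^2 + (1)*a1^2*b3*c2^2 + (-1)*a1^2*b2*c2*c3)*hwb + ((1)*a4^2*b2*b3*c2 + (-1)*a4^2*b2^2*c3 + (1)*a4^2*b1*b3*c1 + (-1)*a4^2*b1^2*c3 + (-1)*a3*a4*b2*b4*c2 + (1)*a3*a4*b2^2*c4 + (-1)*a3*a4*b1*b4*c1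 + (1)*a3*a4*b1^2*c4 + (-1)*a2*a4*b3*b4*c2 + (2)*a2*a4*b2*b4*c3 + (-1)*a2*a4*b2*b3*c4 + (1)*a2*a3*b4^2*c2 + (-1)*a2*a3*b2*b4*c4 + (1)*a2*a3*b1*b2*c1 + (-1)*a2*a3*b1^2*c2 + (-1)*a2^2*b4^2*c3 + (1)*a2^2*b3*b4*c4 + (-1)*a2^2*b1*b3*c1 + (1)*a2^2*b1^2*c3 + (-1)*a1*a4*b3*b4*c1 + (2)*a1*a4*b1*b4*c3 + (-1)*a1*a4*b1*b3*c4 + (1)*a1*a3*b4^2*c1 + (-1)*a1*a3*b2^2*c1 + (-1)*a1*a3*b1*b4*c4 + (1)*a1*a3*b1*b2*c2 + (1)*a1*a2*b2*b3*c1 + (1)*a1*a2*b1*b3*c2 + (-2)*a1*a2*b1*b2*c3 + (-1)*a1^2*b4^2*c3 + (1)*a1^2*b3*b4*c4 + (-1)*a1^2*b2*b3*c2 + (1)*a1^2*b2^2*c3)*hwc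
  have hu4 : d * w4 = s * n4 := by
    linear_combination w4*hd - ((-1)*a3*b2*c1 + (1)*a3*b1*c2 + (1)*a2*b3*c1 + (-1)*a2*b1*c3 + (-1)*a1*b3*c2 + (1)*a1*b2*c3)*hs - s*hn4 + ((-1)*a4*b3^2*c2^2 + (-1)*a4*b3^2*c1^2 + (2)*a4*b2*b3*c2*c3 + (-1)*a4*b2^2*c3^2 + (1)*a4*b2^2*c1^2 + (2)*a4*b1*b3*c1*c3 + (-2)*a4*b1*b2*c1*c2 + (-1)*a4*b1^2*c3^2 + (1)*a4*b1^2*c2^2 + (1)*a3*b3*b4*c2^2 + (1)*a3*b3*b4*c1^2 + (-1)*a3*b2*b4*c2*c3 + (-1)*a3*b2*b3*c2*c4 + (1)*a3*b2^2*c3*c4 + (-1)*a3*b1*b4*c1*c3 + (-1)*a3*b1*b3*c1*c4 + (1)*a3*b1^2*c3*c4 + (-1)*a2*b3*b4*c2*c3 + (1)*a2*b3^2*c2*c4 + (1)*a2*b2*b4*c3^2 + (-1)*a2*b2*b4*c1^2 + (-1)*a2*b2*b3*c3*c4 + (1)*a2*b1*b4*c1*c2 + (1)*a2*b1*b2*c1*c4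 + (-1)*a2*b1^2*c2*c4 + (-1)*a1*b3*b4*c1*c3 + (1)*a1*b3^2*c1*c4 + (1)*a1*b2*b4*c1*c2 + (-1)*a1*b2^2*c1*c4 + (1)*a1*b1*b4*c3^2 + (-1)*a1*b1*b4*c2^2 + (-1)*a1*b1*b3*c3*c4 + (1)*a1*b1*b2*c2*c4)*hwa + ((1)*a3*a4*b3*c2^2 + (1)*a3*a4*b3*c1^2 + (-1)*a3*a4*b2*c2*c3 + (-1)*a3*a4*b1*c1*c3 + (-1)*a3^2*b4*c2^2 + (-1)*a3^2*b4*c1^2 + (1)*a3^2*b2*c2*c4 + (1)*a3^2*b1*c1*c4 + (-1)*a2*a4*b3*c2*c3 + (1)*a2*a4*b2*c3^2 + (-1)*a2*a4*b2*c1^2 + (1)*a2*a4*b1*c1*c2 + (2)*a2*a3*b4*c2*c3 + (-1)*a2*a3*b3*c2*c4 + (-1)*a2*a3*b2*c3*c4 + (-1)*a2^2*b4*c3^2 + (1)*a2^2*b4*c1^2 + (1)*a2^2*b3*c3*c4 + (-1)*a2^2*b1*c1*c4 + (-1)*a1*a4*b3*c1*c3 + (1)*a1*a4*b2*c1*c2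 + (1)*a1*a4*b1*c3^2 + (-1)*a1*a4*b1*c2^2 + (2)*a1*a3*b4*c1*c3 + (-1)*a1*a3*b3*c1*c4 + (-1)*a1*a3*b1*c3*c4 + (-2)*a1*a2*b4*c1*c2 + (1)*a1*a2*b2*c1*c4 + (1)*a1*a2*b1*c2*c4 + (-1)*a1^2*b4*c3^2 + (1)*a1^2*b4*c2^2 + (1)*a1^2*b3*c3*c4 + (-1)*a1^2*b2*c2*c4)*hwb + ((-1)*a3*a4*b2*b3*c2 + (1)*a3*a4*b2^2*c3 + (-1)*a3*a4*b1*b3*c1 + (1)*a3*a4*b1^2*c3 + (1)*a3^2*b2*b4*c2 + (-1)*a3^2*b2^2*c4 + (1)*a3^2*b1*b4*c1 + (-1)*a3^2*b1^2*c4 + (1)*a2*a4*b3^2*c2 + (-1)*a2*a4*b2*b3*c3 + (1)*a2*a4*b1*b2*c1 + (-1)*a2*a4*b1^2*c2 + (-1)*a2*a3*b3*b4*c2 + (-1)*a2*a3*b2*b4*c3 + (2)*a2*a3*b2*b3*c4 + (1)*a2^2*b3*b4*c3 + (-1)*a2^2*b3^2*c4 + (-1)*a2^2*b1*b4*c1 +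 (1)*a2^2*b1^2*c4 + (1)*a1*a4*b3^2*c1 + (-1)*a1*a4*b2^2*c1 + (-1)*a1*a4*b1*b3*c3 + (1)*a1*a4*b1*b2*c2 + (-1)*a1*a3*b3*b4*c1 + (-1)*a1*a3*b1*b4*c3 + (2)*a1*a3*b1*b3*c4 + (1)*a1*a2*b2*b4*c1 + (1)*a1*a2*b1*b4*c2 + (-2)*a1*a2*b1*b2*c4 + (1)*a1^2*b3*b4*c3 + (-1)*a1^2*b3^2*c4 + (-1)*a1^2*b2*b4*c2 + (1)*a1^2*b2^2*c4)*hwc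
  have hkey : d^2 * (-(w1*w1) - w2*w2 + w3*w3 + w4*w4) = s^2 * d := by
    linear_combination (-(d*w1 + s*n1))*hu1 + (-(d*w2 + s*n2))*hu2 + (d*w3 + s*n3)*hu3 + (d*w4 + s*n4)*hu4 - s^2*hQn
  rcases aux_timelike_endgame d s _ hdneg hkey with hlt | ⟨_, hs0⟩
  · exact Or.inr hlt
  · have hdne : d ≠ 0 := ne_of_lt hdneg
    have hw1 : w1 = 0 := by
      have h : d * w1 = 0 := by rw [hs0] at hu1; linear_combination hu1
      exact (mul_eq_zero.mp h).resolve_left hdne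
    have hw2 : w2 = 0 := by
      have h : d * w2 = 0 := by rw [hs0] at hu2; linear_combination hu2
      exact (mul_eq_zero.mp h).resolve_left hdne
    have hw3 : w3 = 0 := by
      have h : d * w3 = 0 := by rw [hs0] at hu3; linear_combination hu3
      exact (mul_eq_zero.mp h).resolve_left hdne
    have hw4 : w4 = 0 := by
      have h : d * w4 = 0 := by rw [hs0] at hu4; linear_combination hu4
      exact (mul_eq_zero.mp h).resolve_left hdne
    subst hw1; subst hw2; subst hw3; subst hw4
    left
    rfl
end
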